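/- Let R = (T^0, …, T^{2m-1}) be a symmetric cycle of {-,+}-sign vectors on E_m, and let M := max⁺(V(R)). Then |M| is odd. -/

import Mathlib

/-- Sign vectors with no zero components on `Fin m`, encoded as Boolean vectors
(`true` is `+`, `false` is `-`). -/
abbrev SV (m : ℕ) := Fin m → Bool

/-- The positive part of a sign vector. -/
def posPart {m : ℕ} (X : SV m) : Finset (Fin m) :=
  Finset.univ.filter (fun e => X e = true)

/-- The separation set of two sign vectors (no zero components). -/
def sep {m : ℕ} (X Y : SV m) : Finset (Fin m) :=
  Finset.univ.filter (fun e => X e ≠ Y e)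

/-- A finite set of sign vectors is a committee if for every coordinate `e`,
strictly more than half of its elements have a `+` at `e`. -/
def isCommitteeB {m : ℕ} (K : Finset (SV m)) : Prop :=
  ∀ e : Fin m, (K.card : ℚ) / 2 < ((K.filter (fun X => X e = true)).card : ℚ)

/-- The elements of a family whose positive parts are inclusion-maximal. -/
def maxPlus {m : ℕ} (V : Finset (SV m)) : Finset (SV m) :=
  V.filter (fun X => ∀ Y ∈ V, ¬ _root_.posPart X ⊂ _root_.posPart Y)


/-!
Let `f k` be the coordinate flipped between `T k` and `T (k+1)`. Since `T (k+m) = -T k`, every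
coordinate flips in every window of `m` consecutive steps, hence exactly once. It follows that
`T (k+1)` is max⁺ exactly when step `k` turns a `-` into a `+` and step `k+1` turns a `+` into a `-`:
any other vector of the cycle either sits at distance at most `m` after `k+1`, and then has `-` at
`f (k+1)`, or at distance at most `m` before `k+1`, and then has `-` at `f k`. So `|M|` counts the
ascents `- → +` of the cyclic sequence `g k := T k (f k)`, which satisfies `g (k+m) = !g k`. The
ascents over a full period are the ascents and descents of `g` on `[0, m]`, i.e. its sign changes
there, and their number is odd because `g 0 ≠ g m`.
-/

open Finset Function

theorem Function.Periodic.exists_mem_Ico_nat {α : Type*} {f : ℕ → α} {p : ℕ} (hf : Periodic f p)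
    (hp : 0 < p) (a l : ℕ) : ∃ l' ∈ Ico a (a + p), f l' = f l := by
  refine ⟨a + (l + a * p - a) % p, by simp [Nat.mod_lt _ hp], ?_⟩
  have hap : a ≤ a * p := Nat.le_mul_of_pos_right a hp
  rw [(hf.const_add a).map_mod_nat, show a + (l + a * p - a) = l + a * p by omega]
  simpa using (hf.nat_mul a) l

theorem Function.Periodic.mem_image_range_add_iff {α : Type*} [DecidableEq α] {f : ℕ → α} {p : ℕ}
    (hf : Periodic f p) (hp : 0 < p) (a : ℕ) {x : α} :
    x ∈ (range p).image (fun k => f (k + a)) ↔ ∃ l, f l = x := by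
  refine ⟨fun hx => ?_, fun ⟨l, hl⟩ => ?_⟩
  · obtain ⟨k, -, hk⟩ := mem_image.mp hx
    exact ⟨k + a, hk⟩
  · obtain ⟨l', hl', hfl'⟩ := hf.exists_mem_Ico_nat hp a l
    rw [mem_Ico] at hl'
    exact mem_image.mpr ⟨l' - a, by simp; omega, by rw [Nat.sub_add_cancel hl'.1, hfl', hl]⟩

theorem odd_card_filter_ne_succ_iff (g : ℕ → Bool) (n : ℕ) :
    Odd ((range n).filter fun k => g k ≠ g (k + 1)).card ↔ g 0 ≠ g n := by
  induction n with
  | zero => simp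
  | succ n ih =>
    rw [range_add_one, filter_insert]
    split_ifs with h
    · rw [card_insert_of_notMem (by simp), Nat.odd_add_one, ih]
      revert h; cases g 0 <;> cases g n <;> cases g (n + 1) <;> simp
    · rw [ih]
      revert h; cases g 0 <;> cases g n <;> cases g (n + 1) <;> simp

theorem odd_card_ascents_of_antiperiodic {m : ℕ} {g : ℕ → Bool} (hg : ∀ k, g (k + m) = !g k) :
    Odd ((range (2 * m)).filter fun k => g k = false ∧ g (k + 1) = true).card := by
  have hcount : ((range (2 * m)).filter fun k => g k = false ∧ g (k + 1) = true).card =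
      ((range m).filter fun k => g k ≠ g (k + 1)).card := by
    simp only [card_filter]
    rw [two_mul, sum_range_add, ← sum_add_distrib]
    refine sum_congr rfl fun k _ => ?_
    rw [add_comm m k, hg, add_right_comm, hg]
    cases g k <;> cases g (k + 1) <;> rfl
  have hm : g m = !g 0 := by simpa using hg 0
  rw [hcount, odd_card_filter_ne_succ_iff, hm]
  cases g 0 <;> simp

section SignVector

variable {m : ℕ} {X Y : SV m} {e : Fin m}

@[simp] theorem mem_sep : e ∈ sep X Y ↔ X e ≠ Y e := by simp [sep]

@[simp] theorem mem_posPart : e ∈ _root_.posPart X ↔ X e = true := by simp [_root_.posPart]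

theorem sep_comm (X Y : SV m) : sep X Y = sep Y X := by
  ext e
  simp [ne_comm]

theorem sep_not_not (X Y : SV m) : sep (fun e => !X e) (fun e => !Y e) = sep X Y := by
  ext e
  simp

theorem apply_of_sep_eq_singleton (h : sep X Y = {e}) : Y e = !X e := by
  have : X e ≠ Y e := mem_sep.mp (h ▸ mem_singleton_self e)
  cases hX : X e <;> cases hY : Y e <;> simp_all

theorem apply_eq_of_sep_eq_singleton {e' : Fin m} (h : sep X Y = {e}) (he' : e' ≠ e) :
    Y e' = X e' := by
  by_contra hne
  exact he' (mem_singleton.mp (h ▸ mem_sep.mpr (Ne.symm hne)))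

theorem posPart_ssubset_of_sep_eq_singleton (h : sep X Y = {e}) (hX : X e = false) :
    _root_.posPart X ⊂ _root_.posPart Y := by
  have hY : Y e = true := by simp [apply_of_sep_eq_singleton h, hX]
  refine Finset.ssubset_iff_subset_ne.mpr ⟨fun e' he' => ?_, fun hXY => ?_⟩
  · rw [mem_posPart] at he' ⊢
    rwa [apply_eq_of_sep_eq_singleton h (by rintro rfl; simp [hX] at he')]
  · have : e ∈ _root_.posPart X := hXY ▸ mem_posPart.mpr hY
    simp [hX] at this

end SignVector

structure IsSymmetricCycle {m : ℕ} (T : ℕ → SV m) (f : ℕ → Fin m) : Prop where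
  antipodal : ∀ k, T (k + m) = fun e => !T k e
  sep_succ : ∀ k, sep (T k) (T (k + 1)) = {f k}

theorem apply_eq_of_forall_flip_ne {m : ℕ} {T : ℕ → SV m} {f : ℕ → Fin m}
    (hf : ∀ k, sep (T k) (T (k + 1)) = {f k}) {e : Fin m}
    {a b : ℕ} (hab : a ≤ b) (hne : ∀ j ∈ Ico a b, f j ≠ e) : T b e = T a e := by
  induction b, hab using Nat.le_induction with
  | base => rfl
  | succ b hab ih =>
    rw [apply_eq_of_sep_eq_singleton (hf b) (hne b (by simp; omega)).symm,
      ih fun j hj => hne j (by simp at hj ⊢; omega)]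

namespace IsSymmetricCycle

variable {m : ℕ} {T : ℕ → SV m} {f : ℕ → Fin m} (hT : IsSymmetricCycle T f)
include hT

theorem periodic : Periodic T (2 * m) := fun k => by
  funext e
  simp [two_mul, ← add_assoc, hT.antipodal]

theorem apply_succ_flip (k : ℕ) : T (k + 1) (f k) = !T k (f k) :=
  apply_of_sep_eq_singleton (hT.sep_succ k)

theorem flip_add_m (k : ℕ) : f (k + m) = f k := by
  have h := hT.sep_succ (k + m)
  rwa [add_right_comm, hT.antipodal, hT.antipodal, sep_not_not, hT.sep_succ, singleton_inj, eq_comm] at h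

theorem injOn_flip_Ico (k : ℕ) : Set.InjOn f (Set.Ico k (k + m)) := by
  have hsurj : (Ico k (k + m)).image f = univ := by
    refine eq_univ_of_forall fun e => ?_
    by_contra he
    have h := apply_eq_of_forall_flip_ne hT.sep_succ (Nat.le_add_right k m)
      fun j hj hje => he (mem_image.mpr ⟨j, hj, hje⟩)
    simp [hT.antipodal] at h
  simpa using injOn_of_card_image_eq (s := Ico k (k + m)) (f := f) (by simp [hsurj])

theorem apply_flip_of_lt_of_le {k l : ℕ} (hkl : k < l) (hlk : l ≤ k + m) :
    T l (f k) = !T k (f k) := by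
  rw [← hT.apply_succ_flip, apply_eq_of_forall_flip_ne hT.sep_succ hkl fun j hj hjk => ?_]
  simp only [mem_Ico] at hj
  have := hT.injOn_flip_Ico k (by simp; omega) (by simp; omega) hjk
  omega

theorem injOn_Ico (a : ℕ) : Set.InjOn T (Set.Ico a (a + 2 * m)) := by
  suffices h : ∀ {b c}, a ≤ b → b < c → c < a + 2 * m → T b ≠ T c by
    intro b hb c hc hbc
    simp only [Set.mem_Ico] at hb hc
    by_contra hne
    rcases Nat.lt_or_gt_of_ne hne with hlt | hlt
    · exact h hb.1 hlt hc.2 hbc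
    · exact h hc.1 hlt hb.2 hbc.symm
  intro b c hb hbc hc hTbc
  rcases le_or_gt c (b + m) with hcb | hcb
  · have := hT.apply_flip_of_lt_of_le hbc hcb
    simp [hTbc] at this
  · have := hT.apply_flip_of_lt_of_le (show c < b + 2 * m by omega) (by omega)
    simp [hT.periodic b, hTbc] at this

theorem not_posPart_ssubset_of_ascent_descent {k : ℕ} (hk : T k (f k) = false)
    (hk1 : T (k + 1) (f (k + 1)) = true) (l : ℕ) :
    ¬ _root_.posPart (T (k + 1)) ⊂ _root_.posPart (T l) := by
  suffices h : ∀ l ∈ Ico (k + 1) (k + 1 + 2 * m),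
      ¬ _root_.posPart (T (k + 1)) ⊂ _root_.posPart (T l) by
    obtain ⟨l', hl', hTl⟩ := hT.periodic.exists_mem_Ico_nat (by simpa using (f 0).pos) (k + 1) l
    exact hTl ▸ h l' hl'
  intro l hl hsub
  rw [mem_Ico] at hl
  have hle : ∀ e, T (k + 1) e = true → T l e = true := fun e he =>
    mem_posPart.mp (hsub.subset (mem_posPart.mpr he))
  rcases (show l = k + 1 ∨ k + 1 < l ∧ l ≤ k + 1 + m ∨ k + m < l ∧ l ≤ k + m + m by omega) with
    rfl | ⟨hl1, hl2⟩ | ⟨hl1, hl2⟩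
  · exact hsub.ne rfl
  · have := hle _ hk1
    simp [hT.apply_flip_of_lt_of_le hl1 hl2, hk1] at this
  · have := hle (f k) (by simp [hT.apply_succ_flip, hk])
    rw [← hT.flip_add_m, hT.apply_flip_of_lt_of_le hl1 hl2, hT.flip_add_m, hT.antipodal] at this
    simp [hk] at this

theorem exists_posPart_ssubset_of_not_ascent_descent {k : ℕ}
    (h : ¬ (T k (f k) = false ∧ T (k + 1) (f (k + 1)) = true)) :
    ∃ l, _root_.posPart (T (k + 1)) ⊂ _root_.posPart (T l) := by
  rw [not_and_or, Bool.not_eq_false, Bool.not_eq_true] at h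
  rcases h with h | h
  · refine ⟨k, posPart_ssubset_of_sep_eq_singleton (e := f k) ?_ ?_⟩
    · rw [sep_comm, hT.sep_succ]
    · simp [hT.apply_succ_flip, h]
  · exact ⟨k + 2, posPart_ssubset_of_sep_eq_singleton (hT.sep_succ (k + 1)) h⟩

theorem forall_not_posPart_ssubset_iff (k : ℕ) :
    (∀ l, ¬ _root_.posPart (T (k + 1)) ⊂ _root_.posPart (T l)) ↔
      T k (f k) = false ∧ T (k + 1) (f (k + 1)) = true :=
  ⟨fun hmax => by_contra fun h =>
      let ⟨l, hl⟩ := hT.exists_posPart_ssubset_of_not_ascent_descent h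
      hmax l hl,
    fun h => hT.not_posPart_ssubset_of_ascent_descent h.1 h.2⟩

theorem maxPlus_image_range :
    maxPlus ((range (2 * m)).image T) =
      ((range (2 * m)).filter fun k => T k (f k) = false ∧ T (k + 1) (f (k + 1)) = true).image
        fun k => T (k + 1) := by
  have hp : 0 < 2 * m := by simpa using (f 0).pos
  have hmem : ∀ a X, X ∈ (range (2 * m)).image (fun k => T (k + a)) ↔ ∃ l, T l = X :=
    hT.periodic.mem_image_range_add_iff hp
  have himage : (range (2 * m)).image T = (range (2 * m)).image fun k => T (k + 1) := by
    ext X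
    rw [hmem 1]
    exact hmem 0 X
  rw [maxPlus, himage, filter_image]
  refine congrArg (image _) (filter_congr fun k _ => ?_)
  rw [← hT.forall_not_posPart_ssubset_iff k]
  simp only [hmem 1, forall_exists_index, forall_apply_eq_imp_iff]

end IsSymmetricCycle

theorem stmt_8_general {m : ℕ} (T : ℕ → SV m)
    (hsym : ∀ k, T (k + m) = fun e => ! T k e)
    (hstep : ∀ k, (sep (T k) (T (k + 1))).card = 1) :
    Odd (maxPlus ((Finset.range (2 * m)).image T)).card := by
  choose f hf using fun k => card_eq_one.mp (hstep k)
  have hT : IsSymmetricCycle T f := ⟨hsym, hf⟩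
  rw [hT.maxPlus_image_range, card_image_of_injOn fun a ha b hb hab => ?_]
  · refine odd_card_ascents_of_antiperiodic (g := fun k => T k (f k)) fun k => ?_
    simp only [hT.flip_add_m, hT.antipodal]
  · simp only [coe_filter, mem_range, Set.mem_ofPred_eq] at ha hb
    have := hT.injOn_Ico 1 (by simp; omega) (by simp; omega) hab
    omega

theorem stmt_8 {m : ℕ} (hm : 0 < m) (T : ℕ → SV m)
    (hsym : ∀ k, T (k + m) = fun e => ! T k e)
    (hstep : ∀ k, (sep (T k) (T (k + 1))).card = 1) :
    Odd (maxPlus ((Finset.range (2 * m)).image T)).card :=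
  stmt_8_general T hsym hstep
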